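/- arXiv:1804.08265 — 2 statements merged into one kernel-verified Lean document; each statement's English description precedes it below -/
import Mathlib

section
/- Let f: ℝ^N → ℝ be twice continuously differentiable such that for all vectors u, x with ‖u‖₀ ≤ k and ‖x‖₀ ≤ k, α_k‖x‖₂² ≤ xᵀ∇²f(u)x ≤ β_k‖x‖₂². Then for any vectors x, y, z with supports T₁, T₂, T₃ respectively, T = T₁∪T₂∪T₃ with |T| ≤ k, and any ρ > 0, one has ⟨x, y - z - ρ(∇f(y) - ∇f(z))⟩ ≤ (|1 - ρ(β_k+α_k)/2| + ρ(β_k-α_k)/2)·‖x‖₂·‖y - z‖₂. -/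
/-!
The mean value theorem for `w ↦ ⟪x, w - ρ • ∇f w⟫` on the segment `[z, y]` turns the left-hand
side into `⟪x, d - ρ • H d⟫`, with `d = y - z` and `H` the Hessian of `f` at some point of the
segment. That point, `x` and `d` all lie in the subspace of vectors supported in `T`, on which
`α ‖v‖² ≤ ⟪v, H v⟫ ≤ β ‖v‖²`. Hence the symmetric operator `H - m` with `m = (β + α) / 2` has
quadratic form bounded by `r ‖v‖²`, `r = (β - α) / 2`, on that subspace, and polarization bounds
`|⟪x, (H - m) d⟫|` by `r ‖x‖ ‖d‖`. Splitting `d - ρ • H d = (1 - ρ m) d - ρ (H - m) d` gives the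
constant `|1 - ρ m| + ρ r`.
-/

open scoped RealInnerProductSpace

section SymmetricBound

variable {E : Type*} [NormedAddCommGroup E] [InnerProductSpace ℝ E]
  {S : Submodule ℝ E} {A : E →L[ℝ] E}

lemma abs_inner_map_le_half_add_sq {r : ℝ}
    (hsymm : ∀ v ∈ S, ∀ w ∈ S, ⟪v, A w⟫ = ⟪w, A v⟫)
    (hquad : ∀ v ∈ S, |⟪v, A v⟫| ≤ r * ‖v‖ ^ 2) {v w : E} (hv : v ∈ S) (hw : w ∈ S) :
    |⟪v, A w⟫| ≤ r / 2 * (‖v‖ ^ 2 + ‖w‖ ^ 2) := by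
  have hpolar : 4 * ⟪v, A w⟫ = ⟪v + w, A (v + w)⟫ - ⟪v - w, A (v - w)⟫ := by
    simp only [map_add, map_sub, inner_add_left, inner_add_right, inner_sub_left,
      inner_sub_right, hsymm w hw v hv]
    ring
  have hadd := abs_le.mp (hquad _ (S.add_mem hv hw))
  have hsub := abs_le.mp (hquad _ (S.sub_mem hv hw))
  have hpar : r * ‖v + w‖ ^ 2 + r * ‖v - w‖ ^ 2 = 4 * (r / 2 * (‖v‖ ^ 2 + ‖w‖ ^ 2)) := by
    rw [← mul_add, parallelogram_law_with_norm ℝ v w]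
    ring
  rw [abs_le]
  constructor <;> linarith

lemma abs_inner_map_le_mul_norm {r : ℝ}
    (hsymm : ∀ v ∈ S, ∀ w ∈ S, ⟪v, A w⟫ = ⟪w, A v⟫)
    (hquad : ∀ v ∈ S, |⟪v, A v⟫| ≤ r * ‖v‖ ^ 2) {v w : E} (hv : v ∈ S) (hw : w ∈ S) :
    |⟪v, A w⟫| ≤ r * ‖v‖ * ‖w‖ := by
  rcases eq_or_ne v 0 with rfl | hv0
  · simp
  rcases eq_or_ne w 0 with rfl | hw0
  · simp
  have hunit := abs_inner_map_le_half_add_sq hsymm hquad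
    (S.smul_mem ‖v‖⁻¹ hv) (S.smul_mem ‖w‖⁻¹ hw)
  have hunit_norm : ∀ u : E, u ≠ 0 → ‖‖u‖⁻¹ • u‖ = 1 := fun u hu => by
    rw [norm_smul, norm_inv, norm_norm, inv_mul_cancel₀ (norm_ne_zero_iff.mpr hu)]
  rw [hunit_norm v hv0, hunit_norm w hw0, map_smul, real_inner_smul_left,
    real_inner_smul_right, abs_mul, abs_mul, abs_inv, abs_inv, abs_norm, abs_norm] at hunit
  calc |⟪v, A w⟫| = ‖v‖ * ‖w‖ * (‖v‖⁻¹ * (‖w‖⁻¹ * |⟪v, A w⟫|)) := by field_simp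
    _ ≤ ‖v‖ * ‖w‖ * (r / 2 * (1 ^ 2 + 1 ^ 2)) := by gcongr
    _ = r * ‖v‖ * ‖w‖ := by ring

lemma abs_inner_map_sub_inner_le {α β : ℝ}
    (hsymm : ∀ v ∈ S, ∀ w ∈ S, ⟪v, A w⟫ = ⟪w, A v⟫)
    (hbounds : ∀ v ∈ S, α * ‖v‖ ^ 2 ≤ ⟪v, A v⟫ ∧ ⟪v, A v⟫ ≤ β * ‖v‖ ^ 2)
    {v w : E} (hv : v ∈ S) (hw : w ∈ S) :
    |⟪v, A w⟫ - (β + α) / 2 * ⟪v, w⟫| ≤ (β - α) / 2 * ‖v‖ * ‖w‖ := by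
  set B := A - ((β + α) / 2) • ContinuousLinearMap.id ℝ E
  have hB : ∀ v w, ⟪v, B w⟫ = ⟪v, A w⟫ - (β + α) / 2 * ⟪v, w⟫ := fun v w => by
    simp [B, inner_sub_right, real_inner_smul_right]
  have hBsymm : ∀ v ∈ S, ∀ w ∈ S, ⟪v, B w⟫ = ⟪w, B v⟫ := fun v hv w hw => by
    rw [hB, hB, hsymm v hv w hw, real_inner_comm w v]
  have hBquad : ∀ v ∈ S, |⟪v, B v⟫| ≤ (β - α) / 2 * ‖v‖ ^ 2 := fun v hv => by
    obtain ⟨hα, hβ⟩ := hbounds v hv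
    rw [hB, real_inner_self_eq_norm_sq, abs_le]
    constructor <;> linarith
  rw [← hB]
  exact abs_inner_map_le_mul_norm hBsymm hBquad hv hw

lemma inner_sub_smul_map_le {α β ρ : ℝ} (hρ : 0 ≤ ρ)
    (hsymm : ∀ v ∈ S, ∀ w ∈ S, ⟪v, A w⟫ = ⟪w, A v⟫)
    (hbounds : ∀ v ∈ S, α * ‖v‖ ^ 2 ≤ ⟪v, A v⟫ ∧ ⟪v, A v⟫ ≤ β * ‖v‖ ^ 2)
    {v w : E} (hv : v ∈ S) (hw : w ∈ S) :
    ⟪v, w - ρ • A w⟫ ≤ (|1 - ρ * ((β + α) / 2)| + ρ * ((β - α) / 2)) * ‖v‖ * ‖w‖ := by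
  have hsplit : ⟪v, w - ρ • A w⟫ = (1 - ρ * ((β + α) / 2)) * ⟪v, w⟫
      - ρ * (⟪v, A w⟫ - (β + α) / 2 * ⟪v, w⟫) := by
    rw [inner_sub_right, real_inner_smul_right]
    ring
  have hfirst : (1 - ρ * ((β + α) / 2)) * ⟪v, w⟫ ≤ |1 - ρ * ((β + α) / 2)| * (‖v‖ * ‖w‖) :=
    (le_abs_self _).trans ((abs_mul _ _).trans_le
      (mul_le_mul_of_nonneg_left (abs_real_inner_le_norm v w) (abs_nonneg _)))
  have hsecond : -(ρ * (⟪v, A w⟫ - (β + α) / 2 * ⟪v, w⟫)) ≤ ρ * ((β - α) / 2 * ‖v‖ * ‖w‖) := by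
    rw [← mul_neg]
    exact mul_le_mul_of_nonneg_left ((neg_le_abs _).trans
      (abs_inner_map_sub_inner_le hsymm hbounds hv hw)) hρ
  rw [hsplit]
  linarith

end SymmetricBound

section Hessian

variable {E : Type*} [NormedAddCommGroup E] [InnerProductSpace ℝ E] [CompleteSpace E]
  {f : E → ℝ}

lemma gradient_eq_comp_fderiv (f : E → ℝ) :
    gradient f = (InnerProductSpace.toDual ℝ E).symm.toLinearIsometry.toContinuousLinearMap ∘
      fderiv ℝ f := rfl

lemma ContDiff.contDiff_gradient {n : WithTop ℕ∞} (hf : ContDiff ℝ (n + 1) f) :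
    ContDiff ℝ n (gradient f) := by
  rw [gradient_eq_comp_fderiv]
  exact (ContinuousLinearMap.contDiff _).comp (hf.fderiv_right le_rfl)

lemma inner_fderiv_gradient_apply {u : E} (hf : DifferentiableAt ℝ (fderiv ℝ f) u) (a b : E) :
    ⟪a, fderiv ℝ (gradient f) u b⟫ = fderiv ℝ (fderiv ℝ f) u b a := by
  rw [gradient_eq_comp_fderiv,
    ((ContinuousLinearMap.hasFDerivAt _).comp u hf.hasFDerivAt).fderiv, real_inner_comm]
  exact InnerProductSpace.toDual_symm_apply

lemma ContDiffAt.inner_fderiv_gradient_comm {u : E} (hf : ContDiffAt ℝ 2 f u) (a b : E) :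
    ⟪a, fderiv ℝ (gradient f) u b⟫ = ⟪b, fderiv ℝ (gradient f) u a⟫ := by
  have hdf : DifferentiableAt ℝ (fderiv ℝ f) u :=
    (hf.fderiv_right (m := 1) le_rfl).differentiableAt one_ne_zero
  rw [inner_fderiv_gradient_apply hdf, inner_fderiv_gradient_apply hdf]
  exact (hf.isSymmSndFDerivAt (by simp)) b a

end Hessian

lemma exists_mem_segment_inner_sub_eq {E F : Type*} [NormedAddCommGroup E] [NormedSpace ℝ E]
    [NormedAddCommGroup F] [InnerProductSpace ℝ F] {g : E → F} {g' : E → E →L[ℝ] F}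
    (hg : ∀ w, HasFDerivAt g (g' w) w) (x : F) (y z : E) :
    ∃ w ∈ segment ℝ z y, ⟪x, g y - g z⟫ = ⟪x, g' w (y - z)⟫ := by
  obtain ⟨w, hw, h⟩ := domain_mvt (f := fun w => ⟪x, g w⟫)
    (f' := fun w => (innerSL ℝ x).comp (g' w))
    (fun w _ => ((innerSL ℝ x).hasFDerivAt.comp w (hg w)).hasFDerivWithinAt)
    convex_univ (Set.mem_univ z) (Set.mem_univ y)
  exact ⟨w, hw, by simpa [inner_sub_right] using h⟩

namespace EuclideanSpace

variable {ι : Type*}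

def supported (T : Set ι) : Submodule ℝ (EuclideanSpace ℝ ι) where
  carrier := {v | Function.support v ⊆ T}
  add_mem' {v w} hv hw := (Function.support_add v w).trans (Set.union_subset hv hw)
  zero_mem' := by simp
  smul_mem' c v hv := (Function.support_const_smul_subset c v).trans hv

lemma ncard_support_le_of_mem_supported [Finite ι] {T : Set ι} {v : EuclideanSpace ℝ ι}
    (hv : v ∈ supported T) : (Function.support v).ncard ≤ T.ncard :=
  Set.ncard_le_ncard hv

end EuclideanSpace

/-- Lemma 1, part 1 (RPDH inner-product inequality). -/
theorem stmt0 {N k : ℕ} (f : EuclideanSpace ℝ (Fin N) → ℝ)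
    (hf : ContDiff ℝ 2 f) (αk βk : ℝ)
    (hRPDH : ∀ u x : EuclideanSpace ℝ (Fin N),
      (Function.support u).ncard ≤ k → (Function.support x).ncard ≤ k →
      αk * ‖x‖ ^ 2 ≤ ⟪x, fderiv ℝ (gradient f) u x⟫ ∧
        ⟪x, fderiv ℝ (gradient f) u x⟫ ≤ βk * ‖x‖ ^ 2)
    (x y z : EuclideanSpace ℝ (Fin N))
    (hT : (Function.support x ∪ Function.support y ∪ Function.support z).ncard ≤ k)
    (ρ : ℝ) (hρ : 0 < ρ) :
    ⟪x, y - z - ρ • (gradient f y - gradient f z)⟫ ≤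
      (|1 - ρ * ((βk + αk) / 2)| + ρ * ((βk - αk) / 2)) * ‖x‖ * ‖y - z‖ := by
  set S := EuclideanSpace.supported
    (Function.support x ∪ Function.support y ∪ Function.support z)
  have hx : x ∈ S := Set.subset_union_left.trans Set.subset_union_left
  have hy : y ∈ S := Set.subset_union_right.trans Set.subset_union_left
  have hz : z ∈ S := Set.subset_union_right
  have hsparse : ∀ v ∈ S, (Function.support v).ncard ≤ k := fun v hv =>
    (EuclideanSpace.ncard_support_le_of_mem_supported hv).trans hT
  have hgrad : ∀ w, HasFDerivAt (gradient f) (fderiv ℝ (gradient f) w) w := fun w =>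
    ((hf.contDiff_gradient (n := 1)).differentiable one_ne_zero w).hasFDerivAt
  obtain ⟨w, hw, hmvt⟩ := exists_mem_segment_inner_sub_eq
    (fun w => (hasFDerivAt_id w).sub ((hgrad w).const_smul ρ)) x y z
  have hwS : w ∈ S := S.convex.segment_subset hz hy hw
  calc ⟪x, y - z - ρ • (gradient f y - gradient f z)⟫
      = ⟪x, (y - z) - ρ • fderiv ℝ (gradient f) w (y - z)⟫ := by
        simpa [sub_sub_sub_comm, smul_sub] using hmvt
    _ ≤ _ := inner_sub_smul_map_le hρ.le
        (fun u _ v _ => hf.contDiffAt.inner_fderiv_gradient_comm u v)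
        (fun v hv => hRPDH w v (hsparse w hwS) (hsparse v hv)) hx (S.sub_mem hy hz)
end

section
/- Let X be a nonnegative irreducible L×L matrix. Then the spectral radius r of X satisfies min_i Σ_j X_{ij} ≤ r ≤ max_i Σ_j X_{ij}. -/
/-!
In the `ℓ∞` operator norm the norm of a nonnegative matrix is its largest row sum, which bounds
every eigenvalue. Conversely, if every row sum of `X` is at least `s ≥ 0`, then every row sum of
`X ^ k` is at least `s ^ k`, so `s ^ k ≤ ‖X ^ k‖` and Gelfand's formula gives `s ≤ ρ(X)`.
-/

open Matrix

def MatIrreducible {L : ℕ} (X : Matrix (Fin L) (Fin L) ℝ) : Prop :=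
  ∀ i j, ∃ t : ℕ, 0 < t ∧ 0 < (X ^ t) i j

open Filter Finset

attribute [local instance] Matrix.linftyOpNormedAddCommGroup Matrix.linftyOpNormedRing
  Matrix.linftyOpNormedAlgebra

theorem spectralRadius_le_ofReal {𝕜 A : Type*} [NormedField 𝕜] [Ring A] [Algebra 𝕜 A]
    {a : A} {r : ℝ} (h : ∀ μ ∈ spectrum 𝕜 a, ‖μ‖ ≤ r) :
    spectralRadius 𝕜 a ≤ ENNReal.ofReal r :=
  iSup₂_le fun μ hμ => by
    rw [← enorm_eq_nnnorm, ← ofReal_norm]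
    exact ENNReal.ofReal_le_ofReal (h μ hμ)

theorem ofReal_le_spectralRadius_of_pow_le_norm_pow {A : Type*} [NormedRing A]
    [NormedAlgebra ℂ A] [CompleteSpace A] {a : A} {s : ℝ} (hs : 0 ≤ s)
    (h : ∀ k : ℕ, s ^ k ≤ ‖a ^ k‖) : ENNReal.ofReal s ≤ spectralRadius ℂ a := by
  refine ge_of_tendsto (spectrum.pow_norm_pow_one_div_tendsto_nhds_spectralRadius a) ?_
  filter_upwards [eventually_ne_atTop 0] with k hk
  calc ENNReal.ofReal s = ENNReal.ofReal ((s ^ k) ^ (1 / k : ℝ)) := by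
        rw [one_div, Real.pow_rpow_inv_natCast hs hk]
    _ ≤ ENNReal.ofReal (‖a ^ k‖ ^ (1 / k : ℝ)) :=
        ENNReal.ofReal_le_ofReal (Real.rpow_le_rpow (by positivity) (h k) (by positivity))

namespace Matrix

variable {m n : Type*} [Fintype m] [Fintype n]

theorem linfty_opNorm_map_ofReal (X : Matrix m n ℝ) : ‖X.map ((↑) : ℝ → ℂ)‖ = ‖X‖ := by
  simp only [linfty_opNorm_def, map_apply, Complex.nnnorm_real]

theorem map_ofReal_pow [DecidableEq n] (X : Matrix n n ℝ) (k : ℕ) :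
    X.map ((↑) : ℝ → ℂ) ^ k = (X ^ k).map (↑) :=
  (X.map_pow Complex.ofRealHom k).symm

theorem linfty_opNorm_eq_sup'_sum_of_nonneg [Nonempty m] {X : Matrix m n ℝ}
    (hX : ∀ i j, 0 ≤ X i j) : ‖X‖ = univ.sup' univ_nonempty fun i => ∑ j, X i j := by
  rw [linfty_opNorm_def, ← sup'_eq_sup univ_nonempty,
    apply_sup'_eq_sup'_comp univ_nonempty _ NNReal.coe_max]
  refine sup'_congr _ rfl fun i _ => ?_
  simp only [Function.comp_apply, NNReal.coe_sum, coe_nnnorm, Real.norm_of_nonneg (hX i _)]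

theorem pow_le_sum_pow_apply [DecidableEq n] {X : Matrix n n ℝ} (hX : ∀ i j, 0 ≤ X i j)
    {s : ℝ} (hs : 0 ≤ s) (hrow : ∀ i, s ≤ ∑ j, X i j) (k : ℕ) (i : n) :
    s ^ k ≤ ∑ j, (X ^ k) i j := by
  induction k generalizing i with
  | zero => simp [one_apply]
  | succ k ih =>
    calc s ^ (k + 1) = s * s ^ k := pow_succ' s k
      _ ≤ (∑ l, X i l) * s ^ k := by gcongr; exact hrow i
      _ ≤ ∑ l, X i l * ∑ j, (X ^ k) l j := by
        rw [sum_mul]; exact sum_le_sum fun l _ => mul_le_mul_of_nonneg_left (ih l) (hX i l)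
      _ = ∑ j, (X ^ (k + 1)) i j := by
        simp only [pow_succ', mul_apply, mul_sum]
        exact sum_comm

end Matrix

theorem stmt13_general {L : ℕ} [NeZero L] (X : Matrix (Fin L) (Fin L) ℝ)
    (hX : ∀ i j, 0 ≤ X i j) (r : ℝ)
    (hr₁ : ∃ μ ∈ spectrum ℂ (X.map ((↑) : ℝ → ℂ)), ‖μ‖ = r)
    (hr₂ : ∀ μ ∈ spectrum ℂ (X.map ((↑) : ℝ → ℂ)), ‖μ‖ ≤ r) :
    (Finset.univ.inf' Finset.univ_nonempty fun i => ∑ j, X i j) ≤ r ∧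
      r ≤ Finset.univ.sup' Finset.univ_nonempty fun i => ∑ j, X i j := by
  obtain ⟨μ, hμ, rfl⟩ := hr₁
  constructor
  · set s := univ.inf' univ_nonempty fun i => ∑ j, X i j
    have hs : 0 ≤ s := le_inf' _ _ fun i _ => sum_nonneg fun j _ => hX i j
    have hpow (k : ℕ) : s ^ k ≤ ‖X.map ((↑) : ℝ → ℂ) ^ k‖ := by
      rw [map_ofReal_pow, linfty_opNorm_map_ofReal,
        linfty_opNorm_eq_sup'_sum_of_nonneg (pow_apply_nonneg hX k)]
      exact le_sup'_of_le _ (mem_univ 0)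
        (pow_le_sum_pow_apply hX hs (fun i => inf'_le _ (mem_univ i)) k 0)
    exact (ENNReal.ofReal_le_ofReal_iff (norm_nonneg μ)).mp
      ((ofReal_le_spectralRadius_of_pow_le_norm_pow hs hpow).trans (spectralRadius_le_ofReal hr₂))
  · calc ‖μ‖ ≤ ‖X.map ((↑) : ℝ → ℂ)‖ := spectrum.norm_le_norm_of_mem hμ
      _ = ‖X‖ := X.linfty_opNorm_map_ofReal
      _ = _ := linfty_opNorm_eq_sup'_sum_of_nonneg hX

/-- Perron–Frobenius row-sum bounds: the spectral radius of a nonnegative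
irreducible matrix lies between the minimum and maximum row sums. -/
theorem stmt13 {L : ℕ} [NeZero L] (X : Matrix (Fin L) (Fin L) ℝ)
    (hX : ∀ i j, 0 ≤ X i j) (hirr : MatIrreducible X) (r : ℝ)
    (hr₁ : ∃ μ ∈ spectrum ℂ (X.map ((↑) : ℝ → ℂ)), ‖μ‖ = r)
    (hr₂ : ∀ μ ∈ spectrum ℂ (X.map ((↑) : ℝ → ℂ)), ‖μ‖ ≤ r) :
    (Finset.univ.inf' Finset.univ_nonempty fun i => ∑ j, X i j) ≤ r ∧
      r ≤ Finset.univ.sup' Finset.univ_nonempty fun i => ∑ j, X i j :=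
  stmt13_general X hX r hr₁ hr₂
end
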